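/- For a triangle with vertices p_i, p_j, p_k in ℝ² and piecewise-linear hat functions φ_i, φ_j on it, the stiffness integral over the triangle satisfies ∫_T ∇φ_i · ∇φ_j dx = −(1/2) cot θ_k, where θ_k is the interior angle at vertex p_k. -/

import Mathlib

open MeasureTheory InnerProductSpace EuclideanGeometry

open Pointwise

noncomputable abbrev E2 := EuclideanSpace ℝ (Fin 2)


lemma gradient_affine (φ : E2 →ᵃ[ℝ] ℝ) (x : E2) :
    gradient (⇑φ) x = (InnerProductSpace.toDual ℝ E2).symm (LinearMap.toContinuousLinearMap φ.linear) := by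
  apply HasGradientAt.gradient
  rw [hasGradientAt_iff_hasFDerivAt]
  simp only [LinearIsometryEquiv.apply_symm_apply]
  have h : ⇑φ = fun y => φ.linear y + φ 0 := by
    funext y
    conv_lhs => rw [φ.decomp]
    simp
  rw [h]
  simpa using (LinearMap.toContinuousLinearMap φ.linear).hasFDerivAt.add_const (φ 0)

lemma inner_gradient_affine (φ : E2 →ᵃ[ℝ] ℝ) (x v : E2) :
    ⟪gradient (⇑φ) x, v⟫_ℝ = φ.linear v := by
  rw [gradient_affine]
  exact InnerProductSpace.toDual_symm_apply



lemma line_null : (volume : Measure (ℝ × ℝ)) {p : ℝ × ℝ | p.1 + p.2 = 1} = 0 := by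
  have hm : MeasurableSet {p : ℝ × ℝ | p.1 + p.2 = 1} :=
    (isClosed_eq (by fun_prop) continuous_const).measurableSet
  rw [MeasureTheory.Measure.volume_eq_prod, Measure.prod_apply hm]
  have : ∀ x : ℝ, (Prod.mk x ⁻¹' {p : ℝ × ℝ | p.1 + p.2 = 1}) = {1 - x} := by
    intro x; ext y; simp [Set.mem_preimage]; constructor <;> intro h <;> linarith
  simp [this]

lemma volume_tri_prod :
    (volume : Measure (ℝ × ℝ)) {p : ℝ × ℝ | 0 ≤ p.1 ∧ 0 ≤ p.2 ∧ p.1 + p.2 ≤ 1}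
      = ENNReal.ofReal (1/2) := by
  set S : Set (ℝ × ℝ) := {p : ℝ × ℝ | 0 ≤ p.1 ∧ 0 ≤ p.2 ∧ p.1 + p.2 ≤ 1} with hS
  set R : Set (ℝ × ℝ) := regionBetween (fun _ => (0:ℝ)) (fun x => 1 - x) (Set.Icc 0 1) with hR
  have hvolR : volume R = ENNReal.ofReal (1/2) := by
    rw [hR, MeasureTheory.Measure.volume_eq_prod,
      volume_regionBetween_eq_integral
        (continuous_const.integrableOn_Icc)
        ((by fun_prop : Continuous fun x : ℝ => 1 - x).integrableOn_Icc)
        measurableSet_Icc (fun x hx => by simp at hx ⊢; linarith [hx.2])]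
    congr 1
    rw [show ((fun x : ℝ => 1 - x) - fun _ => (0:ℝ)) = fun x : ℝ => 1 - x by funext x; simp,
      show ∫ y in Set.Icc (0:ℝ) 1, (1 - y) = ∫ y in (0:ℝ)..1, (1 - y) by
        rw [intervalIntegral.integral_of_le zero_le_one, MeasureTheory.integral_Icc_eq_integral_Ioc]]
    rw [intervalIntegral.integral_sub (intervalIntegrable_const) intervalIntegral.intervalIntegrable_id,
      integral_id, intervalIntegral.integral_const]
    norm_num
  have hRS : R ⊆ S := by
    rintro ⟨x, y⟩ h
    simp only [hR, regionBetween, Set.mem_setOf_eq, Set.mem_Ioo, Set.mem_Icc] at h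
    exact ⟨h.1.1, le_of_lt h.2.1, by linarith [h.2.2]⟩
  have hSR : S ⊆ R ∪ ((Set.univ ×ˢ {(0:ℝ)}) ∪ {p : ℝ × ℝ | p.1 + p.2 = 1}) := by
    rintro ⟨x, y⟩ h
    simp only [hS, Set.mem_setOf_eq] at h
    obtain ⟨hx, hy, hxy⟩ := h
    rcases eq_or_lt_of_le hy with hy0 | hy0
    · exact Or.inr (Or.inl (by simp [← hy0]))
    rcases eq_or_lt_of_le hxy with hxy1 | hxy1
    · exact Or.inr (Or.inr hxy1)
    · exact Or.inl (by
        simp only [hR, regionBetween, Set.mem_setOf_eq, Set.mem_Ioo, Set.mem_Icc]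
        exact ⟨⟨hx, by linarith⟩, hy0, by linarith⟩)
  have hnull : volume ((Set.univ ×ˢ {(0:ℝ)}) ∪ {p : ℝ × ℝ | p.1 + p.2 = 1}) = 0 := by
    refine le_antisymm (le_trans (measure_union_le _ _) ?_) zero_le
    rw [line_null]
    rw [MeasureTheory.Measure.volume_eq_prod, Measure.prod_prod]
    simp
  refine le_antisymm ?_ ?_
  · calc volume S ≤ volume R + volume ((Set.univ ×ˢ {(0:ℝ)}) ∪ {p : ℝ × ℝ | p.1 + p.2 = 1}) :=
        le_trans (measure_mono hSR) (measure_union_le _ _)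
    _ = ENNReal.ofReal (1/2) := by rw [hvolR, hnull, add_zero]
  · rw [← hvolR]; exact measure_mono hRS

lemma volume_T0 :
    volume {x : E2 | 0 ≤ x 0 ∧ 0 ≤ x 1 ∧ x 0 + x 1 ≤ 1} = ENNReal.ofReal (1/2) := by
  have key : MeasurePreserving
      ((MeasurableEquiv.finTwoArrow).trans (MeasurableEquiv.refl (ℝ × ℝ)) ∘
        ((MeasurableEquiv.toLp 2 (Fin 2 → ℝ)).symm))
      volume volume :=
    (volume_preserving_finTwoArrow ℝ).comp (EuclideanSpace.volume_preserving_symm_measurableEquiv_toLp (Fin 2))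
  have := key.measure_preimage
    (s := {p : ℝ × ℝ | 0 ≤ p.1 ∧ 0 ≤ p.2 ∧ p.1 + p.2 ≤ 1})
    (by
      have : MeasurableSet {p : ℝ × ℝ | 0 ≤ p.1 ∧ 0 ≤ p.2 ∧ p.1 + p.2 ≤ 1} :=
        ((isClosed_le continuous_const continuous_fst).inter
          ((isClosed_le continuous_const continuous_snd).inter
            (isClosed_le (continuous_fst.add continuous_snd) continuous_const))).measurableSet
      exact this.nullMeasurableSet)
  rw [← volume_tri_prod, ← this]
  rfl

lemma hull_T0 :
    convexHull ℝ {(0:E2), EuclideanSpace.single 0 1, EuclideanSpace.single 1 1}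
      = {x : E2 | 0 ≤ x 0 ∧ 0 ≤ x 1 ∧ x 0 + x 1 ≤ 1} := by
  apply Set.Subset.antisymm
  · apply convexHull_min
    · rintro x (rfl | rfl | rfl) <;> simp [EuclideanSpace.single_apply]
    · rintro x ⟨hx0, hx1, hx⟩ y ⟨hy0, hy1, hy⟩ s t hs ht hst
      refine ⟨?_, ?_, ?_⟩ <;>
        simp only [PiLp.add_apply, PiLp.smul_apply, smul_eq_mul] <;> nlinarith
  · rintro x ⟨hx0, hx1, hx⟩
    have hz : ∀ i ∈ (Finset.univ : Finset (Fin 3)),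
        (![(0:E2), EuclideanSpace.single 0 1, EuclideanSpace.single 1 1]) i ∈
          ({(0:E2), EuclideanSpace.single 0 1, EuclideanSpace.single 1 1} : Set E2) := by
      intro i _; fin_cases i <;> simp
    have := Finset.centerMass_mem_convexHull (Finset.univ : Finset (Fin 3))
      (w := ![1 - x 0 - x 1, x 0, x 1])
      (by intro i _; fin_cases i <;> simp <;> linarith)
      (by simp [Fin.sum_univ_three]; linarith)
      hz
    convert this using 1
    rw [Finset.centerMass]
    simp only [Fin.sum_univ_three]
    ext j
    fin_cases j <;>
      simp [EuclideanSpace.single_apply, Matrix.cons_val_zero, Matrix.cons_val_one] <;> ring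


/-- The cotangent formula: for hat functions φ_i, φ_j on a nondegenerate triangle with
vertices p_i, p_j, p_k, the stiffness integral equals -(1/2)·cot θ_k, where θ_k is the
interior angle at p_k. -/
theorem cotangent_formula
    (pi pj pk : E2) (hnd : AffineIndependent ℝ ![pi, pj, pk])
    (φi φj : E2 →ᵃ[ℝ] ℝ)
    (hii : φi pi = 1) (hij : φi pj = 0) (hik : φi pk = 0)
    (hjj : φj pj = 1) (hji : φj pi = 0) (hjk : φj pk = 0) :
    (∫ x in convexHull ℝ {pi, pj, pk}, ⟪gradient (⇑φi) x, gradient (⇑φj) x⟫_ℝ)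
      = -(1/2) * Real.cot (EuclideanGeometry.angle pi pk pj) := by
  set a : E2 := pi - pk with ha
  set b : E2 := pj - pk with hb
  -- linear functional values
  have hφia : φi.linear a = 1 := by
    have h := φi.linearMap_vsub pi pk
    simp only [vsub_eq_sub, hii, hik, sub_zero] at h
    rw [ha]; exact h
  have hφib : φi.linear b = 0 := by
    have h := φi.linearMap_vsub pj pk
    simp only [vsub_eq_sub, hij, hik, sub_zero] at h
    rw [hb]; exact h
  have hφja : φj.linear a = 0 := by
    have h := φj.linearMap_vsub pi pk
    simp only [vsub_eq_sub, hji, hjk, sub_zero] at h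
    rw [ha]; exact h
  have hφjb : φj.linear b = 1 := by
    have h := φj.linearMap_vsub pj pk
    simp only [vsub_eq_sub, hjj, hjk, sub_zero] at h
    rw [hb]; exact h
  have hane : a ≠ 0 := fun h => by simp [h] at hφia
  have hbne : b ≠ 0 := fun h => by simp [h] at hφjb
  set c : ℝ := ⟪a, b⟫_ℝ with hc
  set d : ℝ := ‖a‖^2 * ‖b‖^2 - c^2 with hd
  -- strict Cauchy-Schwarz
  have hna : (0:ℝ) < ‖a‖ := norm_pos_iff.mpr hane
  have hnb : (0:ℝ) < ‖b‖ := norm_pos_iff.mpr hbne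
  have hd_pos : 0 < d := by
    have h1 : c < ‖a‖ * ‖b‖ := by
      rw [hc]
      refine inner_lt_norm_mul_iff_real.mpr fun h => ?_
      have := congrArg φj.linear h
      simp only [_root_.map_smul, hφja, hφjb, smul_eq_mul, mul_zero, mul_one] at this
      exact (ne_of_gt hna) this.symm
    have h2 : -(‖a‖ * ‖b‖) < c := by
      have h1' : ⟪-a, b⟫_ℝ < ‖-a‖ * ‖b‖ := by
        refine inner_lt_norm_mul_iff_real.mpr fun h => ?_
        have := congrArg φj.linear h
        simp only [_root_.map_smul, map_neg, hφja, hφjb, smul_eq_mul, mul_zero, mul_one,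
          neg_zero, norm_neg, mul_neg] at this
        exact (ne_of_gt hna) this.symm
      rw [inner_neg_left, norm_neg] at h1'
      -- h1' : -⟪a,b⟫ < ‖a‖ * ‖b‖  (real inner; may need coercion handling)
      push_cast at h1'
      linarith [h1']
    rw [hd]; nlinarith
  have hd_ne : d ≠ 0 := ne_of_gt hd_pos
  -- the linear map sending standard basis to a, b
  set bE : Module.Basis (Fin 2) ℝ E2 := (EuclideanSpace.basisFun (Fin 2) ℝ).toBasis with hbE
  set L : E2 →ₗ[ℝ] E2 := bE.constr ℝ ![a, b] with hL
  have hLa : L (EuclideanSpace.single 0 1) = a := by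
    have h0 : bE 0 = EuclideanSpace.single 0 1 := by
      rw [hbE, OrthonormalBasis.coe_toBasis, EuclideanSpace.basisFun_apply]
    rw [← h0, hL, Module.Basis.constr_basis]
    rfl
  have hLb : L (EuclideanSpace.single 1 1) = b := by
    have h0 : bE 1 = EuclideanSpace.single 1 1 := by
      rw [hbE, OrthonormalBasis.coe_toBasis, EuclideanSpace.basisFun_apply]
    rw [← h0, hL, Module.Basis.constr_basis]
    rfl
  have hdet : LinearMap.det L = a 0 * b 1 - a 1 * b 0 := by
    rw [← LinearMap.det_toMatrix bE]
    have hm : LinearMap.toMatrix bE bE L = !![a 0, b 0; a 1, b 1] := by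
      ext i j
      rw [LinearMap.toMatrix_apply, hL, Module.Basis.constr_basis]
      fin_cases i <;> fin_cases j <;> rfl
    rw [hm, Matrix.det_fin_two_of]; ring
  have hinner_ab : c = a 0 * b 0 + a 1 * b 1 := by
    rw [hc]
    simp [PiLp.inner_apply, Fin.sum_univ_two]; ring
  have hnorma : ‖a‖^2 = a 0 ^ 2 + a 1 ^ 2 := by
    rw [← real_inner_self_eq_norm_sq]
    simp only [PiLp.inner_apply, Fin.sum_univ_two, RCLike.inner_apply, conj_trivial]; ring
  have hnormb : ‖b‖^2 = b 0 ^ 2 + b 1 ^ 2 := by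
    rw [← real_inner_self_eq_norm_sq]
    simp only [PiLp.inner_apply, Fin.sum_univ_two, RCLike.inner_apply, conj_trivial]; ring
  have hlag : (LinearMap.det L)^2 = d := by
    rw [hdet, hd, hnorma, hnormb, hinner_ab]; ring
  have hdet_ne : LinearMap.det L ≠ 0 := fun h => by rw [h] at hlag; simp at hlag; exact hd_ne hlag.symm
  -- span
  have hspan : Submodule.span ℝ ({a, b} : Set E2) = ⊤ := by
    have hr : Set.range ![a, b] = ({a, b} : Set E2) := by
      ext y; constructor
      · rintro ⟨i, rfl⟩; fin_cases i <;> simp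
      · rintro (rfl | rfl)
        exacts [⟨0, rfl⟩, ⟨1, rfl⟩]
    have hrange : LinearMap.range L = ⊤ := by
      refine LinearMap.range_eq_top.mpr ?_
      have hcoe : ⇑(LinearMap.equivOfDetNeZero L hdet_ne) = ⇑L := by
        ext x; rfl
      rw [← hcoe]
      exact (LinearMap.equivOfDetNeZero L hdet_ne).surjective
    rw [← hr, ← Module.Basis.constr_range (b := bE) (S := ℝ), ← hL]
    exact hrange
  -- gradients are constant
  set gi : E2 := (InnerProductSpace.toDual ℝ E2).symm (LinearMap.toContinuousLinearMap φi.linear) with hgi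
  set gj : E2 := (InnerProductSpace.toDual ℝ E2).symm (LinearMap.toContinuousLinearMap φj.linear) with hgj
  have hgic : ∀ x, gradient (⇑φi) x = gi := fun x => gradient_affine φi x
  have hgjc : ∀ x, gradient (⇑φj) x = gj := fun x => gradient_affine φj x
  have hgiv : ∀ v, ⟪gi, v⟫_ℝ = φi.linear v := by
    intro v; rw [← hgic 0]; exact inner_gradient_affine φi 0 v
  have hgjv : ∀ v, ⟪gj, v⟫_ℝ = φj.linear v := by
    intro v; rw [← hgjc 0]; exact inner_gradient_affine φj 0 v
  -- identify gi explicitly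
  set gi' : E2 := d⁻¹ • (‖b‖^2 • a - c • b) with hgi'def
  have hgia : ⟪gi', a⟫_ℝ = 1 := by
    rw [hgi'def, real_inner_smul_left, inner_sub_left, real_inner_smul_left, real_inner_smul_left,
      real_inner_self_eq_norm_sq, real_inner_comm, ← hc]
    have h1 : ‖b‖^2 * ‖a‖^2 - c * c = d := by rw [hd]; ring
    rw [h1]; exact inv_mul_cancel₀ hd_ne
  have hgib : ⟪gi', b⟫_ℝ = 0 := by
    rw [hgi'def, real_inner_smul_left, inner_sub_left, real_inner_smul_left, real_inner_smul_left,
      real_inner_self_eq_norm_sq, ← hc]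
    have h1 : ‖b‖^2 * c - c * ‖b‖^2 = 0 := by ring
    rw [h1, mul_zero]
  have hgieq : gi = gi' := by
    have horth : ∀ v, ⟪gi - gi', v⟫_ℝ = 0 := by
      intro v
      have hv : v ∈ Submodule.span ℝ ({a, b} : Set E2) := by rw [hspan]; trivial
      induction hv using Submodule.span_induction with
      | mem x hx =>
        rcases hx with rfl | rfl
        · rw [inner_sub_left, hgiv, hgia, hφia, sub_self]
        · rw [inner_sub_left, hgiv, hgib, hφib, sub_self]
      | zero => rw [inner_zero_right]
      | add x y _ _ hx hy => rw [inner_add_right, hx, hy, add_zero]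
      | smul r x _ hx => rw [real_inner_smul_right, hx, mul_zero]
    have h0 : gi - gi' = 0 := by
      have := horth (gi - gi')
      rwa [real_inner_self_eq_norm_sq, pow_eq_zero_iff (by norm_num), norm_eq_zero] at this
    exact sub_eq_zero.mp h0
  have hinner_gigj : ⟪gi, gj⟫_ℝ = -(c/d) := by
    rw [hgieq, hgi'def, real_inner_smul_left, inner_sub_left, real_inner_smul_left,
      real_inner_smul_left, real_inner_comm gj a, real_inner_comm gj b, hgjv, hgjv, hφja, hφjb]
    field_simp
    ring
  -- the triangle as an affine image
  have himg : convexHull ℝ ({pi, pj, pk} : Set E2)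
      = pk +ᵥ (L '' (convexHull ℝ ({0, EuclideanSpace.single 0 1, EuclideanSpace.single 1 1} : Set E2))) := by
    rw [LinearMap.image_convexHull, ← convexHull_vadd]
    congr 1
    have himg2 : L '' {0, EuclideanSpace.single 0 1, EuclideanSpace.single 1 1} = {0, a, b} := by
      rw [Set.image_insert_eq, Set.image_insert_eq, Set.image_singleton, map_zero, hLa, hLb]
    rw [himg2]
    ext x
    simp only [Set.mem_vadd_set, Set.mem_insert_iff, Set.mem_singleton_iff]
    constructor
    · rintro (rfl | rfl | rfl)
      · exact ⟨a, Or.inr (Or.inl rfl), by rw [vadd_eq_add, ha]; abel⟩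
      · exact ⟨b, Or.inr (Or.inr rfl), by rw [vadd_eq_add, hb]; abel⟩
      · exact ⟨0, Or.inl rfl, by rw [vadd_eq_add, add_zero]⟩
    · rintro ⟨y, (rfl | rfl | rfl), rfl⟩
      · rw [vadd_eq_add, add_zero]; exact Or.inr (Or.inr rfl)
      · rw [vadd_eq_add, ha]; left; abel
      · rw [vadd_eq_add, hb]; right; left; abel
  have hvol : volume (convexHull ℝ ({pi, pj, pk} : Set E2))
      = ENNReal.ofReal (|LinearMap.det L| * (1/2)) := by
    rw [himg, measure_vadd, Measure.addHaar_image_linearMap, hull_T0, volume_T0,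
      ← ENNReal.ofReal_mul (abs_nonneg _)]
  have hsd : Real.sqrt d = |LinearMap.det L| := by rw [← hlag, Real.sqrt_sq_eq_abs]
  have hsd_pos : 0 < Real.sqrt d := Real.sqrt_pos.mpr hd_pos
  -- the angle
  have hangle : EuclideanGeometry.angle pi pk pj = InnerProductGeometry.angle a b := rfl
  have hcos : Real.cos (InnerProductGeometry.angle a b) = c / (‖a‖ * ‖b‖) :=
    InnerProductGeometry.cos_angle a b
  have hsin : Real.sin (InnerProductGeometry.angle a b) * (‖a‖ * ‖b‖) = Real.sqrt d := by
    rw [InnerProductGeometry.sin_angle_mul_norm_mul_norm]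
    congr 1
    rw [real_inner_self_eq_norm_sq, real_inner_self_eq_norm_sq, ← hc, hd]; ring
  have hsin' : Real.sin (InnerProductGeometry.angle a b) = Real.sqrt d / (‖a‖ * ‖b‖) := by
    rw [← hsin]; field_simp
  have hcot : Real.cot (InnerProductGeometry.angle a b) = c / Real.sqrt d := by
    rw [Real.cot_eq_cos_div_sin, hcos, hsin']
    field_simp
  -- putting it together
  have hint : (∫ x in convexHull ℝ ({pi, pj, pk} : Set E2),
      ⟪gradient (⇑φi) x, gradient (⇑φj) x⟫_ℝ)
      = (volume (convexHull ℝ ({pi, pj, pk} : Set E2))).toReal • (-(c/d)) := by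
    simp only [hgic, hgjc, hinner_gigj]
    exact setIntegral_const _
  rw [hint, hvol, hangle, hcot, ENNReal.toReal_ofReal (by positivity)]
  have hdd : d = Real.sqrt d * Real.sqrt d := (Real.mul_self_sqrt hd_pos.le).symm
  rw [smul_eq_mul, ← hsd]
  rw [hdd]
  have hsdne : Real.sqrt d ≠ 0 := ne_of_gt hsd_pos
  field_simp
  ring
  rw [Real.sq_sqrt (show (0:ℝ) ≤ ‖a‖ ^ 2 * ‖b‖ ^ 2 - c ^ 2 by rw [← hd]; exact hd_pos.le)]
  ring
  rw [Real.sq_sqrt (show (0:ℝ) ≤ ‖a‖ ^ 2 * ‖b‖ ^ 2 - c ^ 2 by rw [← hd]; exact hd_pos.le)]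
  ring
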